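/- arXiv:quant-ph/0309120 — 2 statements merged into one kernel-verified Lean document; each statement's English description precedes it below -/
import Mathlib

section
/- Let Γ(r) = ∑_{x ∈ T_n} exp((2πi/4)·tr(rx)) be the exponential sum over the Teichmüller set of GR(4,n). Then |Γ(r)| = 0 if r ∈ 2T_n with r ≠ 0, |Γ(r)| = 2ⁿ if r = 0, and |Γ(r)| = √(2ⁿ) otherwise. -/
/-!
Reduction mod 2 maps the Teichmüller set `T` bijectively onto the residue field `F = 𝔽_{2ⁿ}`,
and the Teichmüller lift `L : F → T` satisfies `L (a + b) = L a + L b + 2 (L a L b)^{2ⁿ⁻¹}`.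
With it one shows that `σ` is additive and that `tr` reduces mod 2 to the trace of `F`, so
`Ψ x = i^{tr x}` is an additive character of `GR(4,n)` with `Ψ (2x) = (-1)^{Tr x̄}`.
For `r = 2t` the sum `Γ(r)` is then a complete sum of a nontrivial character of `F`, hence `0`.
For `r̄ ≠ 0`, write `Γ(r) = ∑_{a ∈ F} Ψ (r L a)` and substitute `a = b + c` in
`Γ(r) · conj Γ(r)`: the lift formula leaves `∑_c Ψ (r L c) ∑_b (-1)^{Tr (r̄ (b c)^{2ⁿ⁻¹})}`,
whose inner sum is `2ⁿ` for `c = 0` and `0` otherwise, so `|Γ(r)|² = 2ⁿ`.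
-/

open scoped InnerProductSpace

/-- The Galois ring `GR(4,n) = ℤ₄[x]/⟨h(x)⟩`. -/
noncomputable abbrev GR (h : Polynomial (ZMod 4)) : Type :=
  Polynomial (ZMod 4) ⧸ Ideal.span {h}

/-- `ξ = x + ⟨h(x)⟩ ∈ GR(4,n)`. -/
noncomputable def xi (h : Polynomial (ZMod 4)) : GR h :=
  Ideal.Quotient.mk (Ideal.span {h}) Polynomial.X

open Classical in
/-- The Teichmüller set `T_n = {0, 1, ξ, …, ξ^{2ⁿ−2}}`. -/
noncomputable def Teich (n : ℕ) (h : Polynomial (ZMod 4)) : Finset (GR h) :=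
  insert 0 ((Finset.range (2 ^ n - 1)).image fun k => xi h ^ k)

/-- `h` is a monic basic primitive polynomial of degree `n`: it is monic of
degree `n`, its reduction mod 2 is a primitive polynomial over `ℤ₂`
(irreducible, with root `x` of multiplicative order `2ⁿ − 1`), and consequently
`ξ` has multiplicative order `2ⁿ − 1` in `GR(4,n)`. -/
structure IsBasicPrimitive (n : ℕ) (h : Polynomial (ZMod 4)) : Prop where
  monic : h.Monic
  deg : h.natDegree = n
  irred : Irreducible (h.map (ZMod.castHom (by norm_num : (2:ℕ) ∣ 4) (ZMod 2)))
  prim : orderOf (Ideal.Quotient.mk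
      (Ideal.span {h.map (ZMod.castHom (by norm_num : (2:ℕ) ∣ 4) (ZMod 2))})
      Polynomial.X) = 2 ^ n - 1
  xi_order : orderOf (xi h) = 2 ^ n - 1

/-- The exponential sum `Γ(r) = ∑_{x ∈ T_n} exp((2πi/4)·tr(rx))` over the
Teichmüller set of `GR(4,n)`. -/
noncomputable def Gamma (n : ℕ) (h : Polynomial (ZMod 4)) (tr : GR h → ZMod 4)
    (r : GR h) : ℂ :=
  ∑ x ∈ Teich n h,
    Complex.exp (2 * Real.pi * Complex.I * ((tr (r * x)).val : ℂ) / 4)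

open Polynomial

section CharFour

variable {R : Type*} [CommRing R]

lemma add_two_mul_sq (h4 : (4 : R) = 0) (x w : R) : (x + 2 * w) ^ 2 = x ^ 2 := by
  linear_combination (x * w + w ^ 2) * h4

lemma add_two_mul_pow_two_pow (h4 : (4 : R) = 0) (x w : R) {k : ℕ} (hk : k ≠ 0) :
    (x + 2 * w) ^ 2 ^ k = x ^ 2 ^ k := by
  obtain ⟨m, rfl⟩ := Nat.exists_eq_succ_of_ne_zero hk
  rw [pow_succ', pow_mul, pow_mul, add_two_mul_sq h4]

lemma add_pow_two_pow_succ (h4 : (4 : R) = 0) (x y : R) (m : ℕ) :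
    (x + y) ^ 2 ^ (m + 1) = x ^ 2 ^ (m + 1) + y ^ 2 ^ (m + 1) + 2 * (x * y) ^ 2 ^ m := by
  induction m with
  | zero => ring
  | succ m ih =>
    rw [pow_succ 2 (m + 1), pow_mul, ih, add_two_mul_sq h4]
    ring

end CharFour

lemma stdAddChar_two_mul (c : ZMod 4) :
    ZMod.stdAddChar (2 * c) =
      ZMod.stdAddChar (ZMod.castHom (by norm_num : (2 : ℕ) ∣ 4) (ZMod 2) c) := by
  obtain ⟨k, rfl⟩ := ZMod.intCast_surjective c
  rw [map_intCast, ← Int.cast_ofNat, ← Int.cast_mul, ZMod.stdAddChar_coe, ZMod.stdAddChar_coe]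
  congr 1
  push_cast
  ring

noncomputable def traceChar (F : Type*) [CommRing F] [Algebra (ZMod 2) F] : AddChar F ℂ :=
  ZMod.stdAddChar.compAddMonoidHom (Algebra.trace (ZMod 2) F).toAddMonoidHom

lemma isPrimitive_traceChar (F : Type*) [Field F] [Finite F] [Algebra (ZMod 2) F] :
    (traceChar F).IsPrimitive := by
  refine AddChar.IsPrimitive.of_ne_one (AddChar.ne_one_iff.2 ?_)
  obtain ⟨s, hs⟩ := Algebra.trace_surjective (ZMod 2) F 1
  refine ⟨s, fun h1 => one_ne_zero (ZMod.injective_stdAddChar (N := 2) ?_)⟩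
  simpa [traceChar, hs] using h1

lemma sum_addChar_pow_pow_mul {F R : Type*} [Field F] [Fintype F] [DecidableEq F] [CommRing R]
    [IsDomain R] (p : ℕ) [ExpChar F p] {ψ : AddChar F R} (hψ : ψ.IsPrimitive) (k : ℕ)
    (c : F) :
    ∑ x, ψ (x ^ p ^ k * c) = if c = 0 then (Fintype.card F : R) else 0 := by
  rw [← Nat.cast_zero (R := R), ← Nat.cast_ite, ← AddChar.sum_mulShift c hψ]
  exact Fintype.sum_bijective _ (bijective_iterateFrobenius F p k) _ _ fun x => by
    rw [iterateFrobenius_def]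

namespace GR

abbrev reduce : ZMod 4 →+* ZMod 2 := ZMod.castHom (by norm_num : (2 : ℕ) ∣ 4) (ZMod 2)

lemma ker_reduce : RingHom.ker reduce = Ideal.span {2} := by
  ext c
  rw [RingHom.mem_ker, Ideal.mem_span_singleton']
  revert c
  decide

abbrev ResidueField (h : Polynomial (ZMod 4)) : Type := AdjoinRoot (h.map reduce)

noncomputable def residue (h : Polynomial (ZMod 4)) : GR h →+* ResidueField h :=
  Ideal.Quotient.lift _ ((AdjoinRoot.mk _).comp (mapRingHom reduce)) fun p hp => by
    obtain ⟨q, rfl⟩ := Ideal.mem_span_singleton'.1 hp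
    simp

variable {h : Polynomial (ZMod 4)}

lemma residue_mk (p : Polynomial (ZMod 4)) :
    residue h (Ideal.Quotient.mk _ p) = AdjoinRoot.mk _ (p.map reduce) := rfl

lemma residue_xi : residue h (xi h) = AdjoinRoot.root _ := by
  rw [xi, residue_mk, Polynomial.map_X, AdjoinRoot.mk_X]

lemma residue_algebraMap (c : ZMod 4) :
    residue h (algebraMap (ZMod 4) (GR h) c) = algebraMap (ZMod 2) _ (reduce c) :=
  DFunLike.congr_fun (RingHom.ext_zmod ((residue h).comp (algebraMap _ _))
    ((algebraMap (ZMod 2) _).comp reduce)) c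

lemma exists_eq_two_mul_of_residue_eq_zero {x : GR h} (hx : residue h x = 0) :
    ∃ w, x = 2 * w := by
  obtain ⟨p, rfl⟩ := Ideal.Quotient.mk_surjective x
  -- `p̄ = h̄ q̄`, so `p - h q` has even coefficients
  rw [residue_mk, AdjoinRoot.mk_eq_zero] at hx
  obtain ⟨g, hg⟩ := hx
  obtain ⟨q, rfl⟩ := map_surjective reduce (ZMod.ringHom_surjective reduce) g
  have hker : p - h * q ∈ RingHom.ker (mapRingHom reduce) := by
    rw [RingHom.mem_ker, coe_mapRingHom, Polynomial.map_sub, Polynomial.map_mul, hg, sub_self]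
  rw [ker_mapRingHom, ker_reduce, Ideal.map_span, Set.image_singleton,
    Ideal.mem_span_singleton'] at hker
  obtain ⟨v, hv⟩ := hker
  refine ⟨Ideal.Quotient.mk _ v, ?_⟩
  rw [← map_ofNat (Ideal.Quotient.mk _) 2, ← map_mul, Ideal.Quotient.eq, ← C_ofNat, mul_comm,
    hv]
  exact Ideal.mem_span_singleton'.2 ⟨q, by ring⟩

lemma exists_eq_add_two_mul_of_residue_eq {x y : GR h} (hxy : residue h x = residue h y) :
    ∃ w, x = y + 2 * w := by
  obtain ⟨w, hw⟩ :=
    exists_eq_two_mul_of_residue_eq_zero (x := x - y) (by rw [map_sub, hxy, sub_self])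
  exact ⟨w, sub_eq_iff_eq_add'.1 hw⟩

lemma residue_two_mul (x : GR h) : residue h (2 * x) = 0 := by
  rw [map_mul, map_ofNat, ← map_ofNat (algebraMap (ZMod 2) (ResidueField h)),
    show (OfNat.ofNat 2 : ZMod 2) = 0 from rfl, map_zero, zero_mul]

lemma four_eq_zero : (4 : GR h) = 0 := by
  rw [← map_ofNat (algebraMap (ZMod 4) (GR h)) 4]
  exact (algebraMap (ZMod 4) (GR h)).map_zero

lemma two_mul_eq_of_residue_eq {x y : GR h} (hxy : residue h x = residue h y) :
    2 * x = 2 * y := by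
  obtain ⟨w, rfl⟩ := exists_eq_add_two_mul_of_residue_eq hxy
  linear_combination w * four_eq_zero

lemma sq_eq_of_residue_eq {x y : GR h} (hxy : residue h x = residue h y) : x ^ 2 = y ^ 2 := by
  obtain ⟨w, rfl⟩ := exists_eq_add_two_mul_of_residue_eq hxy
  exact add_two_mul_sq four_eq_zero y w

lemma finite_of_monic (hm : h.Monic) : Finite (GR h) :=
  have : Module.Finite (ZMod 4) (AdjoinRoot h) := (AdjoinRoot.powerBasis' hm).finite
  Module.finite_of_finite (ZMod 4) (M := AdjoinRoot h)

lemma moduleFinite_residueField (hm : h.Monic) : Module.Finite (ZMod 2) (ResidueField h) :=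
  (AdjoinRoot.powerBasis (hm.map reduce).ne_zero).finite

lemma finite_residueField (hm : h.Monic) : Finite (ResidueField h) :=
  have := moduleFinite_residueField hm
  Module.finite_of_finite (ZMod 2)

end GR

namespace IsBasicPrimitive

open GR

variable {n : ℕ} {h : Polynomial (ZMod 4)}

lemma fact_irreducible (hbp : IsBasicPrimitive n h) : Fact (Irreducible (h.map reduce)) :=
  ⟨hbp.irred⟩

lemma pos (hbp : IsBasicPrimitive n h) : 0 < n := by
  rw [← hbp.deg, ← hbp.monic.natDegree_map reduce]
  exact natDegree_pos_iff_degree_pos.2 (degree_pos_of_irreducible hbp.irred)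

lemma finrank_residueField (hbp : IsBasicPrimitive n h) :
    Module.finrank (ZMod 2) (ResidueField h) = n := by
  rw [← hbp.deg, ← hbp.monic.natDegree_map reduce]
  exact finrank_quotient_span_eq_natDegree

lemma natCard_residueField (hbp : IsBasicPrimitive n h) :
    Nat.card (ResidueField h) = 2 ^ n := by
  have := moduleFinite_residueField hbp.monic
  rw [Module.natCard_eq_pow_finrank (K := ZMod 2), hbp.finrank_residueField, Nat.card_zmod]

lemma algebraMap_injective (hbp : IsBasicPrimitive n h) :
    Function.Injective (algebraMap (ZMod 4) (GR h)) := by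
  refine (injective_iff_map_eq_zero _).2 fun c hc => by_contra fun hc0 => ?_
  refine hbp.monic.not_dvd_of_natDegree_lt (C_ne_zero.2 hc0) ?_
    (Ideal.mem_span_singleton.1 (Ideal.Quotient.eq_zero_iff_mem.1 hc))
  rw [natDegree_C, hbp.deg]
  exact hbp.pos

lemma orderOf_residue_xi (hbp : IsBasicPrimitive n h) :
    orderOf (residue h (xi h)) = 2 ^ n - 1 := by
  rw [residue_xi]
  exact hbp.prim

lemma two_pow_sub_one_pos (hbp : IsBasicPrimitive n h) : 0 < 2 ^ n - 1 :=
  Nat.sub_pos_of_lt (Nat.one_lt_two_pow hbp.pos.ne')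

lemma residue_xi_pow_ne_zero (hbp : IsBasicPrimitive n h) (k : ℕ) :
    residue h (xi h ^ k) ≠ 0 := by
  have := hbp.fact_irreducible
  have hζ : IsOfFinOrder (residue h (xi h)) := by
    rw [← orderOf_pos_iff, hbp.orderOf_residue_xi]
    exact hbp.two_pow_sub_one_pos
  rw [map_pow]
  exact (hζ.isUnit.pow k).ne_zero

lemma xi_pow_ne_zero (hbp : IsBasicPrimitive n h) (k : ℕ) : xi h ^ k ≠ 0 := fun hk =>
  hbp.residue_xi_pow_ne_zero k (by rw [hk, map_zero])

end IsBasicPrimitive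

namespace GR

variable {n : ℕ} {h : Polynomial (ZMod 4)}

lemma mem_teich_iff {x : GR h} :
    x ∈ Teich n h ↔ x = 0 ∨ ∃ k < 2 ^ n - 1, xi h ^ k = x := by
  classical
  simp [Teich]

lemma zero_mem_teich : (0 : GR h) ∈ Teich n h :=
  mem_teich_iff.2 (Or.inl rfl)

lemma pow_two_pow_of_mem_teich (hbp : IsBasicPrimitive n h) {x : GR h} (hx : x ∈ Teich n h) :
    x ^ 2 ^ n = x := by
  rcases mem_teich_iff.1 hx with rfl | ⟨k, -, rfl⟩
  · exact zero_pow (pow_ne_zero _ two_ne_zero)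
  · have hmod : k * 2 ^ n ≡ k * 1 [MOD 2 ^ n - 1] :=
      (Nat.modEq_sub Nat.one_le_two_pow).mul_left k
    rw [← pow_mul, ← pow_mod_orderOf, hbp.xi_order, hmod, mul_one, ← hbp.xi_order,
      pow_mod_orderOf]

lemma residue_injOn_teich (hbp : IsBasicPrimitive n h) :
    Set.InjOn (residue h) (Teich n h) := by
  classical
  rw [Teich, Finset.coe_insert, Finset.coe_image,
    Set.injOn_insert (by rintro ⟨k, -, hk⟩; exact hbp.xi_pow_ne_zero k hk)]
  refine ⟨Set.InjOn.image_of_comp fun i hi j hj hij => ?_, ?_⟩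
  · simp only [Function.comp_apply, map_pow] at hij
    exact pow_injOn_Iio_orderOf (by simpa [hbp.orderOf_residue_xi] using hi)
      (by simpa [hbp.orderOf_residue_xi] using hj) hij
  · rintro ⟨_, ⟨k, -, rfl⟩, hk⟩
    exact hbp.residue_xi_pow_ne_zero k (by rwa [map_zero] at hk)

lemma card_teich (hbp : IsBasicPrimitive n h) : (Teich n h).card = 2 ^ n := by
  classical
  have hinj : Set.InjOn (xi h ^ ·) (Finset.range (2 ^ n - 1) : Set ℕ) := fun i hi j hj hij =>
    pow_injOn_Iio_orderOf (by simpa [hbp.xi_order] using hi)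
      (by simpa [hbp.xi_order] using hj) hij
  rw [Teich, Finset.card_insert_of_notMem (by simpa using fun k _ => hbp.xi_pow_ne_zero k),
    Finset.card_image_of_injOn hinj, Finset.card_range,
    Nat.sub_add_cancel Nat.one_le_two_pow]

lemma bijOn_residue_teich (hbp : IsBasicPrimitive n h) :
    Set.BijOn (residue h) (Teich n h) Set.univ := by
  classical
  have := finite_residueField hbp.monic
  have := Fintype.ofFinite (ResidueField h)
  refine ⟨Set.mapsTo_univ _ _, residue_injOn_teich hbp, ?_⟩
  rw [← Finset.coe_univ]
  refine Finset.surjOn_of_injOn_of_card_le _ (fun _ _ => Finset.mem_coe.2 (Finset.mem_univ _))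
    (residue_injOn_teich hbp) ?_
  rw [Finset.card_univ, Fintype.card_eq_nat_card, hbp.natCard_residueField, card_teich hbp]

variable (n h) in
noncomputable def teichLift : ResidueField h → GR h :=
  Function.invFunOn (residue h) (Teich n h)

lemma teichLift_mem (hbp : IsBasicPrimitive n h) (s : ResidueField h) :
    teichLift n h s ∈ Teich n h :=
  (bijOn_residue_teich hbp).surjOn.mapsTo_invFunOn (Set.mem_univ s)

lemma residue_teichLift (hbp : IsBasicPrimitive n h) (s : ResidueField h) :
    residue h (teichLift n h s) = s :=
  (bijOn_residue_teich hbp).surjOn.rightInvOn_invFunOn (Set.mem_univ s)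

lemma teichLift_residue_of_mem (hbp : IsBasicPrimitive n h) {x : GR h} (hx : x ∈ Teich n h) :
    teichLift n h (residue h x) = x :=
  (bijOn_residue_teich hbp).invOn_invFunOn.1 hx

lemma teichLift_zero (hbp : IsBasicPrimitive n h) : teichLift n h 0 = 0 := by
  simpa using teichLift_residue_of_mem hbp zero_mem_teich

lemma teichLift_residue (hbp : IsBasicPrimitive n h) (x : GR h) :
    teichLift n h (residue h x) = x ^ 2 ^ n := by
  obtain ⟨w, hw⟩ :=
    exists_eq_add_two_mul_of_residue_eq (residue_teichLift hbp (residue h x)).symm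
  conv_rhs => rw [hw, add_two_mul_pow_two_pow four_eq_zero _ _ hbp.pos.ne',
    pow_two_pow_of_mem_teich hbp (teichLift_mem hbp _)]

lemma teichLift_add (hbp : IsBasicPrimitive n h) (s t : ResidueField h) :
    teichLift n h (s + t) = teichLift n h s + teichLift n h t +
      2 * (teichLift n h s * teichLift n h t) ^ 2 ^ (n - 1) := by
  obtain ⟨m, rfl⟩ := Nat.exists_eq_add_one_of_ne_zero hbp.pos.ne'
  conv_lhs => rw [← residue_teichLift hbp s, ← residue_teichLift hbp t, ← map_add]
  rw [teichLift_residue hbp, add_pow_two_pow_succ four_eq_zero, Nat.add_sub_cancel,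
    pow_two_pow_of_mem_teich hbp (teichLift_mem hbp s),
    pow_two_pow_of_mem_teich hbp (teichLift_mem hbp t)]

lemma exists_teich_add_two_mul (hbp : IsBasicPrimitive n h) (x : GR h) :
    ∃ a ∈ Teich n h, ∃ b ∈ Teich n h, x = a + 2 * b := by
  obtain ⟨w, hw⟩ :=
    exists_eq_add_two_mul_of_residue_eq (residue_teichLift hbp (residue h x)).symm
  refine ⟨_, teichLift_mem hbp (residue h x), _, teichLift_mem hbp (residue h w), ?_⟩
  rwa [← two_mul_eq_of_residue_eq (residue_teichLift hbp _).symm]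

variable (n h) in
def IsFrobenius (σ : GR h → GR h) : Prop :=
  ∀ a b : GR h, a ∈ Teich n h → b ∈ Teich n h → σ (a + 2 * b) = a ^ 2 + 2 * b ^ 2

variable (n h) in
def IsTrace (σ : GR h → GR h) (tr : GR h → ZMod 4) : Prop :=
  ∀ r : GR h, algebraMap (ZMod 4) (GR h) (tr r) = ∑ k ∈ Finset.range n, σ^[k] r

variable {σ : GR h → GR h} {tr : GR h → ZMod 4}

lemma residue_frob (hbp : IsBasicPrimitive n h) (hσ : IsFrobenius n h σ) (x : GR h) :
    residue h (σ x) = residue h x ^ 2 := by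
  obtain ⟨a, ha, b, hb, rfl⟩ := exists_teich_add_two_mul hbp x
  rw [hσ a b ha hb, map_add, map_add, residue_two_mul, residue_two_mul, add_zero, add_zero,
    map_pow]

lemma frob_add (hbp : IsBasicPrimitive n h) (hσ : IsFrobenius n h σ) (x y : GR h) :
    σ (x + y) = σ x + σ y := by
  obtain ⟨a, ha, b, hb, rfl⟩ := exists_teich_add_two_mul hbp x
  obtain ⟨c, hc, d, hd, rfl⟩ := exists_teich_add_two_mul hbp y
  -- `x + y = e + 2 f` with `e, f ∈ T`, where `e = a + c + 2 t` lifts `ā + c̄` and `t² = a c`.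
  set t := (a * c) ^ 2 ^ (n - 1)
  obtain ⟨e, he_mem, he⟩ : ∃ e ∈ Teich n h, e = a + c + 2 * t := by
    refine ⟨_, teichLift_mem hbp (residue h a + residue h c), ?_⟩
    rw [teichLift_add hbp, teichLift_residue_of_mem hbp ha, teichLift_residue_of_mem hbp hc]
  obtain ⟨f, hf_mem, hf⟩ : ∃ f ∈ Teich n h, residue h f = residue h (t + b + d) :=
    ⟨_, teichLift_mem hbp _, residue_teichLift hbp _⟩
  have ht : t ^ 2 = a * c := by
    rw [← pow_mul, ← pow_succ, Nat.sub_add_cancel hbp.pos, mul_pow,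
      pow_two_pow_of_mem_teich hbp ha, pow_two_pow_of_mem_teich hbp hc]
  have hsum : a + 2 * b + (c + 2 * d) = e + 2 * f := by
    linear_combination -he - two_mul_eq_of_residue_eq hf - t * four_eq_zero
  rw [hsum, hσ e f he_mem hf_mem, hσ a b ha hb, hσ c d hc hd, sq_eq_of_residue_eq hf, he,
    add_two_mul_sq four_eq_zero]
  linear_combination 2 * ht + (a * c + t * b + t * d + b * d) * four_eq_zero

lemma residue_frob_iterate (hbp : IsBasicPrimitive n h) (hσ : IsFrobenius n h σ) (k : ℕ)
    (x : GR h) : residue h (σ^[k] x) = residue h x ^ 2 ^ k := by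
  induction k with
  | zero => simp
  | succ k ih =>
    rw [Function.iterate_succ_apply', residue_frob hbp hσ, ih, ← pow_mul, ← pow_succ]

lemma trace_add (hbp : IsBasicPrimitive n h) (hσ : IsFrobenius n h σ) (htr : IsTrace n h σ tr)
    (x y : GR h) : tr (x + y) = tr x + tr y := by
  apply hbp.algebraMap_injective
  rw [map_add, htr, htr, htr, ← Finset.sum_add_distrib]
  exact Finset.sum_congr rfl fun k _ =>
    iterate_map_add (AddMonoidHom.mk' σ (frob_add hbp hσ)) k x y

lemma reduce_trace (hbp : IsBasicPrimitive n h) (hσ : IsFrobenius n h σ) (htr : IsTrace n h σ tr)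
    (x : GR h) : reduce (tr x) = Algebra.trace (ZMod 2) (ResidueField h) (residue h x) := by
  have := hbp.fact_irreducible
  have := finite_residueField hbp.monic
  apply (algebraMap (ZMod 2) (ResidueField h)).injective
  rw [← residue_algebraMap, htr, map_sum, FiniteField.algebraMap_trace_eq_sum_pow,
    hbp.finrank_residueField, Nat.card_zmod]
  exact Finset.sum_congr rfl fun k _ => residue_frob_iterate hbp hσ k x

noncomputable def traceAddChar (hbp : IsBasicPrimitive n h) (hσ : IsFrobenius n h σ)
    (htr : IsTrace n h σ tr) : AddChar (GR h) ℂ :=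
  ZMod.stdAddChar.compAddMonoidHom (AddMonoidHom.mk' tr (trace_add hbp hσ htr))

lemma traceAddChar_apply (hbp : IsBasicPrimitive n h) (hσ : IsFrobenius n h σ)
    (htr : IsTrace n h σ tr) (x : GR h) : traceAddChar hbp hσ htr x = ZMod.stdAddChar (tr x) :=
  rfl

lemma traceAddChar_two_mul (hbp : IsBasicPrimitive n h) (hσ : IsFrobenius n h σ)
    (htr : IsTrace n h σ tr) (x : GR h) :
    traceAddChar hbp hσ htr (2 * x) = traceChar (ResidueField h) (residue h x) := by
  rw [traceAddChar_apply, two_mul, trace_add hbp hσ htr, ← two_mul, stdAddChar_two_mul,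
    reduce_trace hbp hσ htr]
  rfl

lemma traceAddChar_teichLift_add_mul_conj (hbp : IsBasicPrimitive n h)
    (hσ : IsFrobenius n h σ) (htr : IsTrace n h σ tr) (r : GR h) (b c : ResidueField h) :
    traceAddChar hbp hσ htr (r * teichLift n h (b + c)) *
        starRingEnd ℂ (traceAddChar hbp hσ htr (r * teichLift n h b)) =
      traceAddChar hbp hσ htr (r * teichLift n h c) *
        traceChar (ResidueField h) (b ^ 2 ^ (n - 1) * (residue h r * c ^ 2 ^ (n - 1))) := by
  have := finite_of_monic hbp.monic
  have hdiff : r * teichLift n h (b + c) + -(r * teichLift n h b) = r * teichLift n h c +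
      2 * (r * (teichLift n h b * teichLift n h c) ^ 2 ^ (n - 1)) := by
    rw [teichLift_add hbp]
    ring
  rw [← AddChar.map_neg_eq_conj, ← AddChar.map_add_eq_mul, hdiff, AddChar.map_add_eq_mul,
    traceAddChar_two_mul]
  simp only [map_mul, map_pow, residue_teichLift hbp]
  congr 2
  ring

section GaussSum

variable [Fintype (ResidueField h)]

lemma Gamma_eq_sum (hbp : IsBasicPrimitive n h) (hσ : IsFrobenius n h σ)
    (htr : IsTrace n h σ tr) (r : GR h) :
    Gamma n h tr r = ∑ s, traceAddChar hbp hσ htr (r * teichLift n h s) := by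
  have hsurj := (bijOn_residue_teich hbp).surjOn
  rw [← Finset.coe_univ] at hsurj
  refine Finset.sum_nbij (residue h) (fun _ _ => Finset.mem_univ _)
    (bijOn_residue_teich hbp).injOn hsurj fun x hx => ?_
  rw [teichLift_residue_of_mem hbp hx, traceAddChar_apply, ZMod.stdAddChar_apply,
    ZMod.toCircle_apply]
  norm_num

lemma Gamma_zero (hbp : IsBasicPrimitive n h) (hσ : IsFrobenius n h σ)
    (htr : IsTrace n h σ tr) : Gamma n h tr 0 = 2 ^ n := by
  simp only [Gamma_eq_sum hbp hσ htr, zero_mul, AddChar.map_zero_eq_one, Finset.sum_const,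
    Finset.card_univ, Fintype.card_eq_nat_card, hbp.natCard_residueField, nsmul_eq_mul, mul_one]
  norm_num

lemma Gamma_two_mul (hbp : IsBasicPrimitive n h) (hσ : IsFrobenius n h σ)
    (htr : IsTrace n h σ tr) {t : GR h} (ht : residue h t ≠ 0) : Gamma n h tr (2 * t) = 0 := by
  classical
  have := hbp.fact_irreducible
  have := finite_residueField hbp.monic
  simp_rw [Gamma_eq_sum hbp hσ htr, mul_assoc, traceAddChar_two_mul, map_mul,
    residue_teichLift hbp, mul_comm (residue h t)]
  rw [AddChar.sum_mulShift _ (isPrimitive_traceChar _), if_neg ht, Nat.cast_zero]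

lemma Gamma_mul_conj (hbp : IsBasicPrimitive n h) (hσ : IsFrobenius n h σ)
    (htr : IsTrace n h σ tr) {r : GR h} (hr : residue h r ≠ 0) :
    Gamma n h tr r * starRingEnd ℂ (Gamma n h tr r) = 2 ^ n := by
  classical
  have := hbp.fact_irreducible
  have := finite_residueField hbp.monic
  have : CharP (ResidueField h) 2 := charP_of_injective_algebraMap' (ZMod 2) 2
  have hinner : ∀ c, ∑ b, traceChar (ResidueField h)
      (b ^ 2 ^ (n - 1) * (residue h r * c ^ 2 ^ (n - 1))) = if c = 0 then 2 ^ n else 0 := by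
    intro c
    rw [sum_addChar_pow_pow_mul 2 (isPrimitive_traceChar _), Fintype.card_eq_nat_card,
      hbp.natCard_residueField]
    simp [hr]
  rw [Gamma_eq_sum hbp hσ htr, map_sum, Finset.sum_mul_sum, Finset.sum_comm]
  -- substitute `a = b + c` in the inner sum
  refine (Finset.sum_congr rfl fun b _ => (Fintype.sum_equiv (Equiv.addLeft b) _ _ fun c =>
    (traceAddChar_teichLift_add_mul_conj hbp hσ htr r b c).symm).symm).trans ?_
  rw [Finset.sum_comm]
  simp_rw [← Finset.mul_sum, hinner]
  simp [teichLift_zero hbp]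

end GaussSum

end GR

open Classical in
/-- `|Γ(r)| = 0` if `r ∈ 2T_n`, `r ≠ 0`; `|Γ(r)| = 2ⁿ` if `r = 0`; and
`|Γ(r)| = √(2ⁿ)` otherwise.  Here `tr` is the trace map of `GR(4,n)`, i.e.
`tr(x) = ∑_{k<n} σ^k(x)` where `σ(a+2b) = a² + 2b²` is the Frobenius. -/
theorem gamma_abs (n : ℕ) (h : Polynomial (ZMod 4)) (hbp : IsBasicPrimitive n h)
    (σ : GR h → GR h)
    (hσ : ∀ a b : GR h, a ∈ Teich n h → b ∈ Teich n h →
      σ (a + 2 * b) = a ^ 2 + 2 * b ^ 2)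
    (tr : GR h → ZMod 4)
    (htr : ∀ r : GR h,
      algebraMap (ZMod 4) (GR h) (tr r) = ∑ k ∈ Finset.range n, σ^[k] r)
    (r : GR h) :
    ‖Gamma n h tr r‖ =
      if r = 0 then (2 ^ n : ℝ)
      else if ∃ t ∈ Teich n h, r = 2 * t then 0
      else Real.sqrt (2 ^ n) := by
  have := GR.finite_residueField hbp.monic
  have : Fintype (GR.ResidueField h) := Fintype.ofFinite _
  split_ifs with hr0 h2t
  · subst hr0
    simp [GR.Gamma_zero hbp hσ htr]
  · obtain ⟨t, ht, rfl⟩ := h2t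
    have ht0 : GR.residue h t ≠ 0 := fun h0 => hr0 <| by
      rw [← GR.teichLift_residue_of_mem hbp ht, h0, GR.teichLift_zero hbp, mul_zero]
    rw [GR.Gamma_two_mul hbp hσ htr ht0, norm_zero]
  · have hr : GR.residue h r ≠ 0 := fun h0 => by
      obtain ⟨w, rfl⟩ := GR.exists_eq_two_mul_of_residue_eq_zero h0
      exact h2t ⟨_, GR.teichLift_mem hbp (GR.residue h w),
        GR.two_mul_eq_of_residue_eq (GR.residue_teichLift hbp _).symm⟩
    have hsq := GR.Gamma_mul_conj hbp hσ htr hr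
    rw [Complex.mul_conj'] at hsq
    rw [← Real.sqrt_sq (norm_nonneg _)]
    exact congrArg Real.sqrt (by exact_mod_cast hsq)
end

section
/- For every integer d ≥ 2, there exist at least three pairwise mutually unbiased orthonormal bases of ℂ^d, i.e., N(d) ≥ 3. -/
open scoped InnerProductSpace

/-- `B` is a family of `m` pairwise mutually unbiased orthonormal bases of
`ℂ^d`. -/
def IsMUBFamily (d m : ℕ) (B : Fin m → Fin d → EuclideanSpace ℂ (Fin d)) : Prop :=
  (∀ i, Orthonormal ℂ (B i) ∧ Submodule.span ℂ (Set.range (B i)) = ⊤) ∧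
  (∀ i j, i ≠ j → ∀ a b, ‖⟪B i a, B j b⟫_ℂ‖ ^ 2 = 1 / d)

/-- `N d` is the maximal number of pairwise mutually unbiased orthonormal bases
of `ℂ^d`. -/
noncomputable def N (d : ℕ) : ℕ :=
  sSup {m : ℕ | ∃ B : Fin m → Fin d → EuclideanSpace ℂ (Fin d), IsMUBFamily d m B}

/-!
The three bases are the standard basis, the Fourier basis `a ↦ ψ(ab)/√d` and its chirped
version `a ↦ q(a) ψ(ab)/√d`, where `ψ` is the standard additive character of `ZMod d` and
`q(a) = exp(π i (d + 1) a² / d)`. All their entries have modulus `1/√d`, so both are unbiased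
to the standard basis. The chirp satisfies `q(a + b) = q(a) q(b) ψ(ab)` (the factor `d + 1`
makes `(d + 1) a²` well defined modulo `2d` also for even `d`), which turns the overlaps of the
last two bases into quadratic Gauss sums of absolute value `√d`.

Since `sSup` of an unbounded set of naturals is `0`, `3 ≤ N d` also needs a bound on the number
of mutually unbiased bases: the rank-one projections onto the first vectors of `m` such bases
have Gram matrix `(1 - 1/d) I + (1/d) J`, which is positive definite, so `m ≤ d²`.
-/

open scoped Real
open ComplexConjugate Complex ZMod Matrix

open scoped ComplexOrder in
theorem linearIndependent_of_inner_eq_ite {𝕜 E ι : Type*} [RCLike 𝕜] [NormedAddCommGroup E]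
    [InnerProductSpace 𝕜 E] [Finite ι] [DecidableEq ι] {v : ι → E} {r : ℝ} (hr₀ : 0 ≤ r)
    (hr₁ : r < 1) (hv : ∀ i j, ⟪v i, v j⟫_𝕜 = if i = j then 1 else (r : 𝕜)) :
    LinearIndependent 𝕜 v := by
  have hgram : gram 𝕜 v = (1 - r) • (1 : Matrix ι ι 𝕜) + r • vecMulVec 1 (star 1) := by
    ext i j
    rw [gram_apply, hv]
    by_cases h : i = j <;> simp [h, vecMulVec, RCLike.real_smul_eq_coe_mul]
  apply linearIndependent_of_posDef_gram
  rw [hgram]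
  exact (PosDef.one.smul (sub_pos.2 hr₁)).add_posSemidef
    ((posSemidef_vecMulVec_self_star 1).smul hr₀)

noncomputable def outerVec {n : Type*} [Fintype n] (u : EuclideanSpace ℂ n) :
    EuclideanSpace ℂ (n × n) :=
  WithLp.toLp 2 fun p => u p.1 * conj (u p.2)

theorem inner_outerVec {n : Type*} [Fintype n] (u v : EuclideanSpace ℂ n) :
    ⟪outerVec u, outerVec v⟫_ℂ = (‖⟪u, v⟫_ℂ‖ ^ 2 : ℝ) := by
  push_cast
  rw [← Complex.mul_conj']
  simp only [PiLp.inner_apply, RCLike.inner_apply, outerVec, Fintype.sum_prod_type, map_sum,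
    Finset.sum_mul_sum, map_mul, Complex.conj_conj]
  refine Finset.sum_congr rfl fun a _ => Finset.sum_congr rfl fun b _ => ?_
  ring

theorem IsMUBFamily.card_le {d m : ℕ} {B : Fin m → Fin d → EuclideanSpace ℂ (Fin d)}
    (hB : IsMUBFamily d m B) (hd : 2 ≤ d) : m ≤ d * d := by
  let u i := B i ⟨0, by omega⟩
  have hT : LinearIndependent ℂ (fun i => outerVec (u i)) := by
    refine linearIndependent_of_inner_eq_ite (r := 1 / d) (by positivity) ?_ fun i j => ?_
    · rw [div_lt_one (by positivity)]; exact_mod_cast hd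
    rw [inner_outerVec]
    split_ifs with h
    · subst h; simp [u, (hB.1 i).1.1]
    · rw [hB.2 i j h]; norm_cast
  simpa using hT.fintype_card_le_finrank

def IsUnbiased {d : ℕ} (B B' : Fin d → EuclideanSpace ℂ (Fin d)) : Prop :=
  ∀ a b, ‖⟪B a, B' b⟫_ℂ‖ ^ 2 = 1 / d

theorem IsUnbiased.symm {d : ℕ} {B B' : Fin d → EuclideanSpace ℂ (Fin d)}
    (h : IsUnbiased B B') : IsUnbiased B' B :=
  fun a b => norm_inner_symm (𝕜 := ℂ) (B' a) (B b) ▸ h b a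

theorem Orthonormal.span_eq_top {d : ℕ} {B : Fin d → EuclideanSpace ℂ (Fin d)}
    (hB : Orthonormal ℂ B) : Submodule.span ℂ (Set.range B) = ⊤ :=
  hB.linearIndependent.span_eq_top_of_card_eq_finrank' (by simp)

theorem isMUBFamily_three {d : ℕ} {B₀ B₁ B₂ : Fin d → EuclideanSpace ℂ (Fin d)}
    (h₀ : Orthonormal ℂ B₀) (h₁ : Orthonormal ℂ B₁) (h₂ : Orthonormal ℂ B₂)
    (h₀₁ : IsUnbiased B₀ B₁) (h₀₂ : IsUnbiased B₀ B₂) (h₁₂ : IsUnbiased B₁ B₂) :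
    IsMUBFamily d 3 ![B₀, B₁, B₂] := by
  refine ⟨fun i => ?_, fun i j hij => ?_⟩
  · fin_cases i
    exacts [⟨h₀, h₀.span_eq_top⟩, ⟨h₁, h₁.span_eq_top⟩, ⟨h₂, h₂.span_eq_top⟩]
  · fin_cases i <;> fin_cases j
    all_goals first
      | exact absurd rfl hij
      | assumption
      | exact IsUnbiased.symm ‹_›

theorem pow_eq_pow_of_dvd_sub {M : Type*} [Monoid M] {ζ : M} {k a b : ℕ} (hζ : ζ ^ k = 1)
    (hab : (k : ℤ) ∣ b - a) : ζ ^ a = ζ ^ b := by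
  rw [← pow_mod_orderOf, ← pow_mod_orderOf ζ b]
  exact congrArg _ <| Nat.modEq_iff_dvd.2 <|
    (Int.natCast_dvd_natCast.2 (orderOf_dvd_of_pow_eq_one hζ)).trans hab

theorem isPrimitiveRoot_exp_pi_div (d : ℕ) [NeZero d] :
    IsPrimitiveRoot (exp (π * I / d)) (2 * d) := by
  convert Complex.isPrimitiveRoot_exp (2 * d) (NeZero.ne _) using 2
  push_cast
  field_simp

noncomputable def quadPhase (d : ℕ) (x : ZMod d) : ℂ := exp (π * I / d) ^ ((d + 1) * x.val ^ 2)

section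
variable {d : ℕ} [NeZero d]

theorem stdAddChar_eq_pow (x : ZMod d) : stdAddChar x = exp (π * I / d) ^ (2 * x.val) := by
  rw [stdAddChar_apply, toCircle_apply, ← Complex.exp_nat_mul]
  push_cast
  ring_nf

theorem quadPhase_add (x y : ZMod d) :
    quadPhase d (x + y) = quadPhase d x * quadPhase d y * stdAddChar (x * y) := by
  rw [quadPhase, quadPhase, quadPhase, stdAddChar_eq_pow, ← pow_add, ← pow_add]
  refine pow_eq_pow_of_dvd_sub (isPrimitiveRoot_exp_pi_div d).pow_eq_one ?_
  rw [val_add, val_mul]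
  obtain ⟨c, hc⟩ : (2 : ℤ) ∣ d * (d + 1) := (Int.even_mul_succ_self d).two_dvd
  push_cast
  rw [Int.emod_def, Int.emod_def]
  set u : ℤ := (x.val : ℤ)
  set v : ℤ := (y.val : ℤ)
  -- `(x + y).val = u + v - d t` and `(x * y).val = u v - d s`, where `t, s` are the quotients
  exact ⟨(d + 1) * (u + v) * ((u + v) / d) - u * v - c * ((u + v) / d) ^ 2 - u * v / d,
    by linear_combination (-((u + v) / d) ^ 2 * d) * hc⟩

theorem norm_quadPhase (x : ZMod d) : ‖quadPhase d x‖ = 1 := by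
  rw [quadPhase, norm_pow, (isPrimitiveRoot_exp_pi_div d).norm'_eq_one (NeZero.ne _), one_pow]

theorem norm_sq_sum_quadPhase_mul (k : ZMod d) :
    ‖∑ x, quadPhase d x * stdAddChar (x * k)‖ ^ 2 = d := by
  have hshift (x h : ZMod d) : quadPhase d (x + h) * stdAddChar ((x + h) * k) *
      conj (quadPhase d x * stdAddChar (x * k)) =
        quadPhase d h * stdAddChar (h * k) * stdAddChar (x * h) := by
    have hq : conj (quadPhase d x) * quadPhase d x = 1 := by
      rw [Complex.conj_mul', norm_quadPhase]; simp
    have hψ : conj (stdAddChar (x * k)) * stdAddChar (x * k) = 1 := by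
      rw [Complex.conj_mul', AddChar.norm_apply]; simp
    rw [quadPhase_add, add_mul, AddChar.map_add_eq_mul stdAddChar (x * k),
      map_mul (starRingEnd ℂ)]
    linear_combination (quadPhase d h * stdAddChar (h * k) * stdAddChar (x * h)) *
      (conj (stdAddChar (x * k)) * stdAddChar (x * k) * hq + hψ)
  apply Complex.ofReal_injective
  push_cast
  rw [← Complex.mul_conj', map_sum, Finset.sum_mul_sum, Finset.sum_comm]
  calc ∑ y, ∑ x, quadPhase d x * stdAddChar (x * k) * conj (quadPhase d y * stdAddChar (y * k))
      = ∑ y, ∑ h, quadPhase d h * stdAddChar (h * k) * stdAddChar (y * h) := by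
        refine Finset.sum_congr rfl fun y _ => ?_
        rw [← Equiv.sum_comp (Equiv.addLeft y)]
        simp only [Equiv.coe_addLeft, hshift]
    _ = ∑ h, quadPhase d h * stdAddChar (h * k) * ∑ y, stdAddChar (y * h) := by
        rw [Finset.sum_comm]; simp only [Finset.mul_sum]
    _ = d := by
        simp [AddChar.sum_mulShift _ (isPrimitive_stdAddChar d), quadPhase]

noncomputable def fourierVec (φ : ZMod d → ℂ) (b : Fin d) : EuclideanSpace ℂ (Fin d) :=
  WithLp.toLp 2 fun a => φ (finEquiv d a) * stdAddChar (finEquiv d a * finEquiv d b) / √d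

theorem inner_fourierVec (φ φ' : ZMod d → ℂ) (b c : Fin d) :
    ⟪fourierVec φ b, fourierVec φ' c⟫_ℂ =
      (∑ x, conj (φ x) * φ' x * stdAddChar (x * (finEquiv d c - finEquiv d b))) / d := by
  have hd : ((√d : ℝ) : ℂ) * (√d : ℝ) = d := by
    rw [← ofReal_mul, Real.mul_self_sqrt d.cast_nonneg, ofReal_natCast]
  rw [PiLp.inner_apply, Finset.sum_div]
  refine Fintype.sum_equiv (finEquiv d).toEquiv _ _ fun a => ?_
  simp only [fourierVec, RCLike.inner_apply, map_div₀, map_mul, conj_ofReal,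
    ← AddChar.map_neg_eq_conj, RingEquiv.toEquiv_eq_coe, EquivLike.coe_coe]
  rw [mul_sub, sub_eq_add_neg, AddChar.map_add_eq_mul, ← hd]
  ring

theorem orthonormal_fourierVec {φ : ZMod d → ℂ} (hφ : ∀ x, ‖φ x‖ = 1) :
    Orthonormal ℂ (fourierVec φ) := by
  rw [orthonormal_iff_ite]
  intro b c
  have hφ' (x : ZMod d) : conj (φ x) * φ x = 1 := by rw [Complex.conj_mul', hφ]; simp
  simp only [inner_fourierVec, hφ', one_mul, AddChar.sum_mulShift _ (isPrimitive_stdAddChar d),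
    sub_eq_zero, (finEquiv d).injective.eq_iff, eq_comm (a := c)]
  split_ifs <;> simp

theorem isUnbiased_single_fourierVec {φ : ZMod d → ℂ} (hφ : ∀ x, ‖φ x‖ = 1) :
    IsUnbiased (fun a => EuclideanSpace.single a 1) (fourierVec φ) := by
  intro a b
  simp [EuclideanSpace.inner_single_left, fourierVec, hφ, AddChar.norm_apply]

theorem isUnbiased_fourierVec_one_quadPhase :
    IsUnbiased (fourierVec (1 : ZMod d → ℂ)) (fourierVec (quadPhase d)) := by
  intro b c
  simp only [inner_fourierVec, Pi.one_apply, map_one, one_mul]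
  rw [norm_div, div_pow, norm_sq_sum_quadPhase_mul, norm_natCast]
  field_simp

end

/-- In every dimension `d ≥ 2` there exist at least three pairwise mutually
unbiased orthonormal bases of `ℂ^d`; in particular `N(d) ≥ 3`. -/
theorem three_mubs (d : ℕ) (hd : 2 ≤ d) :
    (∃ B : Fin 3 → Fin d → EuclideanSpace ℂ (Fin d), IsMUBFamily d 3 B) ∧
    3 ≤ N d := by
  have : NeZero d := ⟨by omega⟩
  have hB : IsMUBFamily d 3
      ![fun a => EuclideanSpace.single a 1, fourierVec 1, fourierVec (quadPhase d)] :=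
    isMUBFamily_three (EuclideanSpace.orthonormal_single (𝕜 := ℂ) (ι := Fin d))
      (orthonormal_fourierVec (by simp)) (orthonormal_fourierVec norm_quadPhase)
      (isUnbiased_single_fourierVec (by simp)) (isUnbiased_single_fourierVec norm_quadPhase)
      isUnbiased_fourierVec_one_quadPhase
  refine ⟨⟨_, hB⟩, le_csSup ⟨d * d, ?_⟩ ⟨_, hB⟩⟩
  rintro m ⟨B, hB⟩
  exact hB.card_le hd
end
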